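/- arXiv:1102.4973 — 2 statements merged into one kernel-verified Lean document; each statement's English description precedes it below -/
import Mathlib

section
/- Let λ = (λ₁,…,λ_n) be a dominant weight for SO(2n,ℂ) (so λ₁ ≥ ⋯ ≥ λ_{n-1} ≥ |λ_n|) with λ_n = 0, n ≥ 3. If every weight of the irreducible representation with highest weight λ has at most 2 nonzero entries, then λ is one of (0,…,0), (1,0,…,0), (2,0,…,0), or (1,1,0,…,0). -/
lemma aux_three_nonzero {n : ℕ} {χ : Fin n → ℤ} {i j k : Fin n}
    (hij : i ≠ j) (hik : i ≠ k) (hjk : j ≠ k)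
    (hi : χ i ≠ 0) (hj : χ j ≠ 0) (hk : χ k ≠ 0) :
    ¬ ({l | χ l ≠ 0} : Set (Fin n)).ncard ≤ 2 := by
  intro h
  have hsub : ({i, j, k} : Set (Fin n)) ⊆ {l | χ l ≠ 0} := by
    intro x hx
    simp only [Set.mem_insert_iff, Set.mem_singleton_iff] at hx
    rcases hx with rfl | rfl | rfl <;> assumption
  have h3 : ({i, j, k} : Set (Fin n)).ncard = 3 := by
    rw [Set.ncard_insert_of_notMem (by simp [hij, hik]) (Set.toFinite _),
        Set.ncard_pair hjk]
  have hle := Set.ncard_le_ncard hsub (Set.toFinite _)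
  omega

set_option maxHeartbeats 1000000 in
/-- Let `λ = (λ₁,…,λ_n)` be a dominant weight for `SO(2n,ℂ)` (so
`λ₁ ≥ ⋯ ≥ λ_{n-1} ≥ λ_n ≥ 0`) with `λ_n = 0`, `n ≥ 3`. Let `S` be the set of
weights of the irreducible representation with highest weight `λ`: it contains
`λ`, is invariant under the Weyl group (even sign changes and permutations of
coordinates), and is `Φ`-saturated for the roots `±ε_i ± ε_j`, `i ≠ j`. If every
weight in `S` has at most `2` nonzero entries, then `λ` is one of `(0,…,0)`,
`(1,0,…,0)`, `(2,0,…,0)`, `(1,1,0,…,0)`. -/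
theorem weights_with_at_most_two_nonzero_entries (n : ℕ) (hn : 3 ≤ n)
    (lam : Fin n → ℤ)
    (hdom : ∀ i j : Fin n, i ≤ j → lam j ≤ lam i)
    (hnonneg : ∀ i, 0 ≤ lam i)
    (hlast : lam ⟨n - 1, by omega⟩ = 0)
    (S : Set (Fin n → ℤ))
    (hlamS : lam ∈ S)
    (hW : ∀ χ ∈ S, ∀ σ : Equiv.Perm (Fin n), ∀ e : Fin n → ℤ,
      (∀ i, e i = 1 ∨ e i = -1) → (∏ i, e i) = 1 →
      (fun i => e i * χ (σ i)) ∈ S)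
    (hsat : ∀ χ ∈ S, ∀ i j : Fin n, i ≠ j → ∀ s t : ℤ,
      (s = 1 ∨ s = -1) → (t = 1 ∨ t = -1) → ∀ k : ℤ,
      ((0 ≤ k ∧ k ≤ s * χ i + t * χ j) ∨ (s * χ i + t * χ j ≤ k ∧ k ≤ 0)) →
      (fun l => χ l - k * ((if l = i then s else 0) + (if l = j then t else 0))) ∈ S)
    (hfew : ∀ χ ∈ S, ({i | χ i ≠ 0} : Set (Fin n)).ncard ≤ 2) :
    (∀ i, lam i = 0)
    ∨ (lam = fun i : Fin n => if (i : ℕ) = 0 then (1:ℤ) else 0)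
    ∨ (lam = fun i : Fin n => if (i : ℕ) = 0 then (2:ℤ) else 0)
    ∨ (lam = fun i : Fin n => if (i : ℕ) ≤ 1 then (1 : ℤ) else 0) := by
  set i0 : Fin n := ⟨0, by omega⟩ with hi0
  set i1 : Fin n := ⟨1, by omega⟩ with hi1
  set i2 : Fin n := ⟨2, by omega⟩ with hi2
  have ne01 : i0 ≠ i1 := by simp [hi0, hi1, Fin.ext_iff]
  have ne02 : i0 ≠ i2 := by simp [hi0, hi2, Fin.ext_iff]
  have ne12 : i1 ≠ i2 := by simp [hi1, hi2, Fin.ext_iff]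
  have h01 : lam i1 ≤ lam i0 := hdom i0 i1 (by simp [hi0, hi1, Fin.le_def])
  have h12 : lam i2 ≤ lam i1 := hdom i1 i2 (by simp [hi1, hi2, Fin.le_def])
  -- lam i2 = 0
  have h2 : lam i2 = 0 := by
    by_contra h2
    have hb := hnonneg i2
    exact aux_three_nonzero ne01 ne02 ne12
      (by intro h; have := hnonneg i2; omega)
      (by intro h; omega) h2 (hfew lam hlamS)
  -- all later entries are 0
  have hzero : ∀ i : Fin n, 2 ≤ (i : ℕ) → lam i = 0 := by
    intro i hi
    have := hdom i2 i (by simp [hi2, Fin.le_def]; omega)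
    have := hnonneg i
    omega
  have hbnn : 0 ≤ lam i1 := hnonneg i1
  have hχ1mem : 1 ≤ lam i1 → (fun l => lam l - 1 * ((if l = i1 then (1:ℤ) else 0) + (if l = i2 then (-1:ℤ) else 0))) ∈ S := by
    intro hb1
    exact hsat lam hlamS i1 i2 ne12 1 (-1) (Or.inl rfl) (Or.inr rfl) 1
      (Or.inl ⟨by norm_num, by rw [h2]; omega⟩)
  have v0 : lam i0 - 1 * ((if i0 = i1 then (1:ℤ) else 0) + (if i0 = i2 then (-1:ℤ) else 0)) = lam i0 := by
    rw [if_neg ne01, if_neg ne02]; ring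
  have v1 : lam i1 - 1 * ((if i1 = i1 then (1:ℤ) else 0) + (if i1 = i2 then (-1:ℤ) else 0)) = lam i1 - 1 := by
    rw [if_pos rfl, if_neg ne12]; ring
  have v2 : lam i2 - 1 * ((if i2 = i1 then (1:ℤ) else 0) + (if i2 = i2 then (-1:ℤ) else 0)) = lam i2 + 1 := by
    rw [if_pos rfl, if_neg ne12.symm]; ring
  have hble : lam i1 ≤ 1 := by
    by_contra hb2
    push_neg at hb2
    have hm := hχ1mem (by omega)
    exact aux_three_nonzero ne01 ne02 ne12 (by rw [v0]; omega) (by rw [v1]; omega)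
      (by rw [v2]; omega) (hfew _ hm)
  rcases (by omega : lam i1 = 1 ∨ lam i1 = 0) with hb1 | hb0
  · -- b = 1 : show a = 1, conclude fourth disjunct
    have hm := hχ1mem (by omega)
    have ha1 : lam i0 = 1 := by
      by_contra haa
      have ha2 : 2 ≤ lam i0 := by omega
      have hm2 := hsat _ hm i0 i1 ne01 1 (-1) (Or.inl rfl) (Or.inr rfl) 1
        (Or.inl ⟨by norm_num, by rw [v0, v1]; omega⟩)
      have w0 : lam i0 - 1 * ((if i0 = i1 then (1:ℤ) else 0) + (if i0 = i2 then (-1:ℤ) else 0))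
          - 1 * ((if i0 = i0 then (1:ℤ) else 0) + (if i0 = i1 then (-1:ℤ) else 0)) = lam i0 - 1 := by
        rw [v0, if_pos rfl, if_neg ne01]; ring
      have w1 : lam i1 - 1 * ((if i1 = i1 then (1:ℤ) else 0) + (if i1 = i2 then (-1:ℤ) else 0))
          - 1 * ((if i1 = i0 then (1:ℤ) else 0) + (if i1 = i1 then (-1:ℤ) else 0)) = lam i1 := by
        rw [v1, if_pos rfl, if_neg ne01.symm]; ring
      have w2 : lam i2 - 1 * ((if i2 = i1 then (1:ℤ) else 0) + (if i2 = i2 then (-1:ℤ) else 0))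
          - 1 * ((if i2 = i0 then (1:ℤ) else 0) + (if i2 = i1 then (-1:ℤ) else 0)) = lam i2 + 1 := by
        rw [v2, if_neg ne02.symm, if_neg ne12.symm]; ring
      exact aux_three_nonzero ne01 ne02 ne12 (by rw [w0]; omega) (by rw [w1]; omega)
        (by rw [w2]; omega) (hfew _ hm2)
    right; right; right
    funext i
    rcases (by omega : (i : ℕ) = 0 ∨ (i : ℕ) = 1 ∨ 2 ≤ (i : ℕ)) with h | h | h
    · have hii : i = i0 := Fin.ext h
      subst hii; rw [ha1, if_pos (by omega : (i0 : ℕ) ≤ 1)]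
    · have hii : i = i1 := Fin.ext h
      subst hii; rw [hb1, if_pos (by omega : (i1 : ℕ) ≤ 1)]
    · rw [hzero i h, if_neg (by omega : ¬ (i : ℕ) ≤ 1)]
  · -- b = 0
    have u0 : lam i0 - 1 * ((if i0 = i0 then (1:ℤ) else 0) + (if i0 = i1 then (-1:ℤ) else 0)) = lam i0 - 1 := by
      rw [if_pos rfl, if_neg ne01]; ring
    have u1 : lam i1 - 1 * ((if i1 = i0 then (1:ℤ) else 0) + (if i1 = i1 then (-1:ℤ) else 0)) = lam i1 + 1 := by
      rw [if_pos rfl, if_neg ne01.symm]; ring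
    have u2 : lam i2 - 1 * ((if i2 = i0 then (1:ℤ) else 0) + (if i2 = i1 then (-1:ℤ) else 0)) = lam i2 := by
      rw [if_neg ne02.symm, if_neg ne12.symm]; ring
    have hale : lam i0 ≤ 2 := by
      by_contra haa
      push_neg at haa
      have hm := hsat lam hlamS i0 i1 ne01 1 (-1) (Or.inl rfl) (Or.inr rfl) 1
        (Or.inl ⟨by norm_num, by omega⟩)
      have hm2 := hsat _ hm i0 i2 ne02 1 (-1) (Or.inl rfl) (Or.inr rfl) 1
        (Or.inl ⟨by norm_num, by rw [u0, u2]; omega⟩)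
      have z0 : lam i0 - 1 * ((if i0 = i0 then (1:ℤ) else 0) + (if i0 = i1 then (-1:ℤ) else 0))
          - 1 * ((if i0 = i0 then (1:ℤ) else 0) + (if i0 = i2 then (-1:ℤ) else 0)) = lam i0 - 2 := by
        rw [u0, if_pos rfl, if_neg ne02]; ring
      have z1 : lam i1 - 1 * ((if i1 = i0 then (1:ℤ) else 0) + (if i1 = i1 then (-1:ℤ) else 0))
          - 1 * ((if i1 = i0 then (1:ℤ) else 0) + (if i1 = i2 then (-1:ℤ) else 0)) = lam i1 + 1 := by
        rw [u1, if_neg ne01.symm, if_neg ne12]; ring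
      have z2 : lam i2 - 1 * ((if i2 = i0 then (1:ℤ) else 0) + (if i2 = i1 then (-1:ℤ) else 0))
          - 1 * ((if i2 = i0 then (1:ℤ) else 0) + (if i2 = i2 then (-1:ℤ) else 0)) = lam i2 + 1 := by
        rw [u2, if_pos rfl, if_neg ne02.symm]; ring
      exact aux_three_nonzero ne01 ne02 ne12 (by rw [z0]; omega) (by rw [z1]; omega)
        (by rw [z2]; omega) (hfew _ hm2)
    have hvals : ∀ i : Fin n, 1 ≤ (i : ℕ) → lam i = 0 := by
      intro i hi
      rcases (by omega : (i : ℕ) = 1 ∨ 2 ≤ (i : ℕ)) with h | h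
      · have hii : i = i1 := Fin.ext h
        subst hii; omega
      · exact hzero i h
    rcases (by omega : lam i0 = 0 ∨ lam i0 = 1 ∨ lam i0 = 2) with h | h | h
    · left
      intro i
      rcases (by omega : (i : ℕ) = 0 ∨ 1 ≤ (i : ℕ)) with hh | hh
      · have hii : i = i0 := Fin.ext hh
        subst hii; omega
      · exact hvals i hh
    · right; left
      funext i
      rcases (by omega : (i : ℕ) = 0 ∨ 1 ≤ (i : ℕ)) with hh | hh
      · have hii : i = i0 := Fin.ext hh
        subst hii; rw [h, if_pos (by omega : (i0 : ℕ) = 0)]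
      · rw [hvals i hh, if_neg (by omega : ¬ (i : ℕ) = 0)]
    · right; right; left
      funext i
      rcases (by omega : (i : ℕ) = 0 ∨ 1 ≤ (i : ℕ)) with hh | hh
      · have hii : i = i0 := Fin.ext hh
        subst hii; rw [h, if_pos (by omega : (i0 : ℕ) = 0)]
      · rw [hvals i hh, if_neg (by omega : ¬ (i : ℕ) = 0)]
end

section
/- In the split octonion algebra 𝕆 realized as Zorn vector matrices, the subgroup of algebra automorphisms fixing pointwise the diagonal matrices is isomorphic to SL(3,ℂ), acting by (a v; w b) ↦ (a l(v); (lᵗ)⁻¹(w) b) for l ∈ SL(3,ℂ). -/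
noncomputable section

open Matrix

/-- The split octonions, realized as Zorn vector matrices `(a v; w b)` with
`a, b ∈ ℂ` and `v, w ∈ ℂ³`, encoded as the quadruple `(a, v, w, b)`. -/
abbrev Oct := ℂ × (Fin 3 → ℂ) × (Fin 3 → ℂ) × ℂ

/-- The Zorn vector matrix multiplication on the split octonions. -/
def octMul (X Y : Oct) : Oct :=
  ⟨X.1 * Y.1 + dotProduct X.2.1 Y.2.2.1,
   Y.2.2.2 • X.2.1 + X.1 • Y.2.1 - crossProduct X.2.2.1 Y.2.2.1,
   Y.1 • X.2.2.1 + X.2.2.2 • Y.2.2.1 + crossProduct X.2.1 Y.2.1,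
   X.2.2.2 * Y.2.2.2 + dotProduct X.2.2.1 Y.2.1⟩

/-- The identity element of the split octonions. -/
def octOne : Oct := (1, 0, 0, 1)

/-- The norm form `N(X) = ab - ⟨v,w⟩` of the split octonions. -/
def octNorm (X : Oct) : ℂ := X.1 * X.2.2.2 - dotProduct X.2.1 X.2.2.1

/-- An automorphism of the split octonion algebra: a linear bijection preserving
the multiplication, the identity and the norm. -/
def IsOctAut (f : Oct → Oct) : Prop :=
  Function.Bijective f ∧ IsLinearMap ℂ f ∧
  (∀ X Y, f (octMul X Y) = octMul (f X) (f Y)) ∧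
  f octOne = octOne ∧ (∀ X, octNorm (f X) = octNorm X)

/-! An automorphism fixing the diagonal idempotent `e = (1 0; 0 0)` preserves its Peirce spaces
`e𝕆(1 - e) = {(0 v; 0 0)}` and `(1 - e)𝕆e = {(0 0; w 0)}`, acting on them by matrices `L` and
`M`. Multiplicativity on `(0 v; 0 0)(0 0; w 0) = (⟨v,w⟩ 0; 0 0)` gives `Lᵀ M = 1`, and on
`(0 v; 0 0)(0 v'; 0 0) = (0 0; v × v' 0)` it gives `M = adj(L)ᵀ`; together `det L = 1` and
`M = (Lᵀ)⁻¹`. Conversely, for `det L = 1` the identities `Lv × Lv' = (Lᵀ)⁻¹(v × v')` and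
`⟨Lv, (Lᵀ)⁻¹w⟩ = ⟨v, w⟩` make this action an automorphism. -/

section CrossProduct

variable {R : Type*} [CommRing R]

lemma crossProduct_mulVec_mulVec (A : Matrix (Fin 3) (Fin 3) R) (v w : Fin 3 → R) :
    (A *ᵥ v) ⨯₃ (A *ᵥ w) = (adjugate A)ᵀ *ᵥ (v ⨯₃ w) := by
  funext i
  fin_cases i <;>
    simp [cross_apply, mulVec, dotProduct, Fin.sum_univ_three, adjugate_fin_three] <;> ring

lemma crossProduct_mulVec_mulVec_of_det_eq_one {A : Matrix (Fin 3) (Fin 3) R} (hA : A.det = 1)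
    (v w : Fin 3 → R) : (A *ᵥ v) ⨯₃ (A *ᵥ w) = Aᵀ⁻¹ *ᵥ (v ⨯₃ w) := by
  rw [crossProduct_mulVec_mulVec, ← transpose_nonsing_inv, inv_def, hA]
  simp

lemma eq_adjugate_transpose_of_mulVec_crossProduct {A M : Matrix (Fin 3) (Fin 3) R}
    (h : ∀ v w, M *ᵥ (v ⨯₃ w) = (A *ᵥ v) ⨯₃ (A *ᵥ w)) : M = (adjugate A)ᵀ := by
  have single_eq_cross : ∀ i : Fin 3,
      Pi.single i 1 = Pi.single (i + 1) 1 ⨯₃ Pi.single (i + 2) (1 : R) := by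
    intro i
    fin_cases i <;> funext j <;> fin_cases j <;> simp [cross_apply]
  refine ext_of_mulVec_single fun i => ?_
  rw [single_eq_cross, h, crossProduct_mulVec_mulVec]

end CrossProduct

section DotProduct

variable {n R : Type*} [Fintype n] [DecidableEq n]

lemma transpose_mul_eq_one_of_dotProduct_mulVec [CommSemiring R] {A B : Matrix n n R}
    (h : ∀ v w, (A *ᵥ v) ⬝ᵥ (B *ᵥ w) = v ⬝ᵥ w) : Aᵀ * B = 1 := by
  ext i j
  simpa [mul_apply, mulVec_single_one, dotProduct, one_apply, Pi.single_apply, eq_comm]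
    using h (Pi.single i 1) (Pi.single j 1)

lemma dotProduct_mulVec_transpose_inv_mulVec [CommRing R] {A : Matrix n n R} (hA : IsUnit A.det)
    (v w : n → R) : (A *ᵥ v) ⬝ᵥ (Aᵀ⁻¹ *ᵥ w) = v ⬝ᵥ w := by
  rw [← vecMul_transpose, dotProduct_mulVec, vecMul_vecMul,
    mul_nonsing_inv _ (by rwa [det_transpose]), vecMul_one]

lemma det_eq_one_of_transpose_mul_adjugate_transpose [Nonempty n] [CommRing R]
    {A : Matrix n n R} (h : Aᵀ * (adjugate A)ᵀ = 1) : A.det = 1 := by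
  rw [← transpose_mul, adjugate_mul, transpose_smul, transpose_one] at h
  simpa using congrFun (congrFun h (Classical.arbitrary n)) (Classical.arbitrary n)

end DotProduct

def octAct (L : Matrix (Fin 3) (Fin 3) ℂ) (X : Oct) : Oct :=
  (X.1, L *ᵥ X.2.1, Lᵀ⁻¹ *ᵥ X.2.2.1, X.2.2.2)

lemma octAct_one (X : Oct) : octAct 1 X = X := by
  simp [octAct]

lemma octAct_octAct (A B : Matrix (Fin 3) (Fin 3) ℂ) (X : Oct) :
    octAct A (octAct B X) = octAct (A * B) X := by
  simp [octAct, mulVec_mulVec, transpose_mul, Matrix.mul_inv_rev]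

lemma octAct_injective : Function.Injective octAct := fun _ _ h =>
  mulVec_injective <| funext fun v => congrArg (·.2.1) (congrFun h (0, v, 0, 0))

lemma octAct_bijective {L : Matrix (Fin 3) (Fin 3) ℂ} (hL : IsUnit L.det) :
    Function.Bijective (octAct L) :=
  Function.bijective_iff_has_inverse.mpr ⟨octAct L⁻¹,
    fun X => by rw [octAct_octAct, nonsing_inv_mul _ hL, octAct_one],
    fun X => by rw [octAct_octAct, mul_nonsing_inv _ hL, octAct_one]⟩

lemma isLinearMap_octAct (L : Matrix (Fin 3) (Fin 3) ℂ) : IsLinearMap ℂ (octAct L) :=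
  ⟨fun X Y => by simp [octAct, mulVec_add], fun c X => by simp [octAct, mulVec_smul]⟩

lemma octNorm_octAct {L : Matrix (Fin 3) (Fin 3) ℂ} (hL : IsUnit L.det) (X : Oct) :
    octNorm (octAct L X) = octNorm X := by
  simp only [octNorm, octAct, dotProduct_mulVec_transpose_inv_mulVec hL]

lemma octAct_octMul {L : Matrix (Fin 3) (Fin 3) ℂ} (hL : L.det = 1) (X Y : Oct) :
    octAct L (octMul X Y) = octMul (octAct L X) (octAct L Y) := by
  have hLu : IsUnit L.det := hL ▸ isUnit_one
  have hLinv : (Lᵀ⁻¹).det = 1 := by simp [det_nonsing_inv, hL]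
  have hLinvT : (Lᵀ⁻¹)ᵀ⁻¹ = L := by
    rw [← transpose_nonsing_inv L, transpose_transpose, nonsing_inv_nonsing_inv _ hLu]
  simp only [octMul, octAct, Prod.mk.injEq, mulVec_add, mulVec_sub, mulVec_smul,
    dotProduct_mulVec_transpose_inv_mulVec hLu, crossProduct_mulVec_mulVec_of_det_eq_one hL,
    crossProduct_mulVec_mulVec_of_det_eq_one hLinv, hLinvT]
  rw [dotProduct_comm (Lᵀ⁻¹ *ᵥ _), dotProduct_mulVec_transpose_inv_mulVec hLu, dotProduct_comm]
  simp

lemma isOctAut_octAct {L : Matrix (Fin 3) (Fin 3) ℂ} (hL : L.det = 1) : IsOctAut (octAct L) :=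
  have hLu : IsUnit L.det := hL ▸ isUnit_one
  ⟨octAct_bijective hLu, isLinearMap_octAct L, octAct_octMul hL, by simp [octAct, octOne],
    octNorm_octAct hLu⟩

lemma diag_one_zero_octMul (X : Oct) : octMul (1, 0, 0, 0) X = (X.1, X.2.1, 0, 0) := by
  simp [octMul]

lemma octMul_diag_one_zero (X : Oct) : octMul X (1, 0, 0, 0) = (X.1, 0, X.2.2.1, 0) := by
  simp [octMul]

section MultiplicativeMap

variable {f : Oct → Oct}

lemma apply_upper_eq (hmul : ∀ X Y, f (octMul X Y) = octMul (f X) (f Y)) (hf0 : f 0 = 0)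
    (he : f (1, 0, 0, 0) = (1, 0, 0, 0)) (v : Fin 3 → ℂ) :
    f (0, v, 0, 0) = (0, (f (0, v, 0, 0)).2.1, 0, 0) := by
  have hleft := hmul (1, 0, 0, 0) (0, v, 0, 0)
  have hright := hmul (0, v, 0, 0) (1, 0, 0, 0)
  simp only [diag_one_zero_octMul, octMul_diag_one_zero, he] at hleft hright
  have hfst : (f (0, v, 0, 0)).1 = 0 := by
    simpa [Prod.mk_zero_zero, hf0] using (congrArg Prod.fst hright).symm
  exact hleft.trans (by rw [hfst])

lemma apply_lower_eq (hmul : ∀ X Y, f (octMul X Y) = octMul (f X) (f Y)) (hf0 : f 0 = 0)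
    (he : f (1, 0, 0, 0) = (1, 0, 0, 0)) (w : Fin 3 → ℂ) :
    f (0, 0, w, 0) = (0, 0, (f (0, 0, w, 0)).2.2.1, 0) := by
  have hright := hmul (0, 0, w, 0) (1, 0, 0, 0)
  have hleft := hmul (1, 0, 0, 0) (0, 0, w, 0)
  simp only [diag_one_zero_octMul, octMul_diag_one_zero, he] at hleft hright
  have hfst : (f (0, 0, w, 0)).1 = 0 := by
    simpa [Prod.mk_zero_zero, hf0] using (congrArg Prod.fst hleft).symm
  exact hright.trans (by rw [hfst])

lemma exists_matrix_apply_upper (hlin : IsLinearMap ℂ f)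
    (hmul : ∀ X Y, f (octMul X Y) = octMul (f X) (f Y)) (he : f (1, 0, 0, 0) = (1, 0, 0, 0)) :
    ∃ L : Matrix (Fin 3) (Fin 3) ℂ, ∀ v, f (0, v, 0, 0) = (0, L *ᵥ v, 0, 0) := by
  let g := LinearMap.fst ℂ _ _ ∘ₗ LinearMap.snd ℂ ℂ _ ∘ₗ hlin.mk' f ∘ₗ
    LinearMap.inr ℂ ℂ _ ∘ₗ LinearMap.inl ℂ _ (_ × ℂ)
  refine ⟨LinearMap.toMatrix' g, fun v => ?_⟩
  rw [LinearMap.toMatrix'_mulVec, apply_upper_eq hmul hlin.map_zero he]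
  rfl

lemma exists_matrix_apply_lower (hlin : IsLinearMap ℂ f)
    (hmul : ∀ X Y, f (octMul X Y) = octMul (f X) (f Y)) (he : f (1, 0, 0, 0) = (1, 0, 0, 0)) :
    ∃ M : Matrix (Fin 3) (Fin 3) ℂ, ∀ w, f (0, 0, w, 0) = (0, 0, M *ᵥ w, 0) := by
  let g := LinearMap.fst ℂ _ _ ∘ₗ LinearMap.snd ℂ _ _ ∘ₗ LinearMap.snd ℂ ℂ _ ∘ₗ hlin.mk' f ∘ₗ
    LinearMap.inr ℂ ℂ _ ∘ₗ LinearMap.inr ℂ (Fin 3 → ℂ) _ ∘ₗ LinearMap.inl ℂ _ ℂ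
  refine ⟨LinearMap.toMatrix' g, fun w => ?_⟩
  rw [LinearMap.toMatrix'_mulVec, apply_lower_eq hmul hlin.map_zero he]
  rfl

end MultiplicativeMap

lemma exists_det_eq_one_and_eq_octAct {f : Oct → Oct} (hlin : IsLinearMap ℂ f)
    (hmul : ∀ X Y, f (octMul X Y) = octMul (f X) (f Y))
    (hdiag : ∀ a b : ℂ, f (a, 0, 0, b) = (a, 0, 0, b)) :
    ∃ L : Matrix (Fin 3) (Fin 3) ℂ, L.det = 1 ∧ f = octAct L := by
  obtain ⟨L, hL⟩ := exists_matrix_apply_upper hlin hmul (hdiag 1 0)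
  obtain ⟨M, hM⟩ := exists_matrix_apply_lower hlin hmul (hdiag 1 0)
  have hdot : ∀ v w, (L *ᵥ v) ⬝ᵥ (M *ᵥ w) = v ⬝ᵥ w := fun v w => by
    simpa [octMul, hL, hM, hdiag] using (hmul (0, v, 0, 0) (0, 0, w, 0)).symm
  have hcross : ∀ v w, M *ᵥ (v ⨯₃ w) = (L *ᵥ v) ⨯₃ (L *ᵥ w) := fun v w => by
    simpa [octMul, hL, hM] using hmul (0, v, 0, 0) (0, w, 0, 0)
  have hLM : Lᵀ * M = 1 := transpose_mul_eq_one_of_dotProduct_mulVec hdot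
  have hdet : L.det = 1 := det_eq_one_of_transpose_mul_adjugate_transpose <|
    eq_adjugate_transpose_of_mulVec_crossProduct hcross ▸ hLM
  refine ⟨L, hdet, funext fun X => ?_⟩
  have hX : X = ((X.1, 0, 0, X.2.2.2) : Oct) + (0, X.2.1, 0, 0) + (0, 0, X.2.2.1, 0) := by
    simp
  rw [hX, hlin.map_add, hlin.map_add, hdiag, hL, hM, ← inv_eq_right_inv hLM]
  simp [octAct]

/-- In the split octonion algebra realized as Zorn vector matrices, the group of
algebra automorphisms fixing pointwise the diagonal matrices is isomorphic to
`SL(3,ℂ)`, acting by `(a v; w b) ↦ (a l(v); (lᵗ)⁻¹(w) b)` for `l ∈ SL(3,ℂ)`. -/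
theorem oct_aut_fixing_diagonal_iff_SL3 :
    (∀ f : Oct → Oct, IsOctAut f → (∀ a b : ℂ, f (a, 0, 0, b) = (a, 0, 0, b)) →
      ∃! l : Matrix.SpecialLinearGroup (Fin 3) ℂ, ∀ X : Oct,
        f X = (X.1, Matrix.mulVec (l : Matrix (Fin 3) (Fin 3) ℂ) X.2.1,
          Matrix.mulVec (Matrix.transpose (l : Matrix (Fin 3) (Fin 3) ℂ))⁻¹ X.2.2.1,
          X.2.2.2)) ∧
    (∀ l : Matrix.SpecialLinearGroup (Fin 3) ℂ,
      IsOctAut (fun X : Oct =>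
        (X.1, Matrix.mulVec (l : Matrix (Fin 3) (Fin 3) ℂ) X.2.1,
          Matrix.mulVec (Matrix.transpose (l : Matrix (Fin 3) (Fin 3) ℂ))⁻¹ X.2.2.1,
          X.2.2.2)) ∧
      ∀ a b : ℂ,
        (fun X : Oct =>
          ((X.1, Matrix.mulVec (l : Matrix (Fin 3) (Fin 3) ℂ) X.2.1,
            Matrix.mulVec (Matrix.transpose (l : Matrix (Fin 3) (Fin 3) ℂ))⁻¹ X.2.2.1,
            X.2.2.2) : Oct)) (a, 0, 0, b) = (a, 0, 0, b)) := by
  refine ⟨fun f hf hdiag => ?_, fun l => ⟨isOctAut_octAct l.2, fun a b => by simp⟩⟩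
  obtain ⟨-, hlin, hmul, -, -⟩ := hf
  obtain ⟨L, hdet, rfl⟩ := exists_det_eq_one_and_eq_octAct hlin hmul hdiag
  exact ⟨⟨L, hdet⟩, fun X => rfl, fun l hl =>
    Subtype.ext (octAct_injective (funext hl)).symm⟩
end
end
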